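/- (Combined skew bound) Let â_{i,i−1} > 0 be declared skews along a chain 1,…,n, and let i* ≥ 2 be the index minimizing the skew product â_{k,1} with â_{i*,1} ≤ 1. Suppose time-stamps satisfy parameter consistency τ^{j,l} = â_{j,j−1}·τ^{j−1,r} + b̂_{j,j−1} for 2 ≤ j ≤ n and causality τ^{j,l} ≤ τ^{j,r}. Then Σ_{j=2}^{n} (τ^{j,l} − τ^{j−1,r}) ≤ (â_{i*,1} − 1)·τ^{1,r} + ((â_{n,i*} − 1)/â_{n,i*})·τ^{n,l} + b̂_{n,1}/â_{n,i*}, where b̂_{n,1} := Σ_{j=2}^{n} â_{n,j}·b̂_{j,j−1}. -/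

import Mathlib

/-!
Write `d k = r k - l k ≥ 0` for the holding time at node `k`. Telescoping turns the left-hand
side into `l n - r 1 - ∑_{2 ≤ k < n} d k`, and unrolling parameter consistency gives
`l n = â_{n,1} r 1 + b̂_{n,1} + ∑_{2 ≤ k < n} â_{n,k} d k`. Substituting the latter, the
right-hand side becomes `l n - r 1 - (â_{i*,1} / â_{n,1}) ∑_{2 ≤ k < n} â_{n,k} d k`, and the
claim reduces termwise to `â_{i*,1} â_{n,k} ≤ â_{k,1} â_{n,k} = â_{n,1}`, i.e. to the
minimality of `â_{i*,1}`.
-/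

open Finset

/-- The paper's `â_{j,k} = ∏_{i=k+1}^{j} â_{i,i−1}`, with `a i` standing for `â_{i,i−1}`. -/
def skewProd (a : ℕ → ℝ) (j k : ℕ) : ℝ := ∏ i ∈ Icc (k + 1) j, a i

section SkewProd

variable (a : ℕ → ℝ)

@[simp]
theorem skewProd_self (j : ℕ) : skewProd a j j = 1 := by
  simp [skewProd]

theorem skewProd_succ {j k : ℕ} (h : k ≤ j) :
    skewProd a (j + 1) k = a (j + 1) * skewProd a j k := by
  rw [skewProd, prod_Icc_succ_top (by omega), mul_comm, skewProd]

theorem skewProd_mul_skewProd {m j k : ℕ} (hkj : k ≤ j) (hjm : j ≤ m) :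
    skewProd a m j * skewProd a j k = skewProd a m k := by
  simp only [skewProd, Icc_add_one_left_eq_Ioc]
  rw [mul_comm, prod_Ioc_consecutive a hkj hjm]

end SkewProd

theorem sum_Icc_sub_eq_sub_sum_Ico (l r : ℕ → ℝ) {n : ℕ} (hn : 2 ≤ n) :
    ∑ j ∈ Icc 2 n, (l j - r (j - 1)) = l n - r 1 - ∑ k ∈ Ico 2 n, (r k - l k) := by
  induction n, hn using Nat.le_induction with
  | base => simp
  | succ n hn ih =>
    rw [sum_Icc_succ_top (by omega), sum_Ico_succ_top hn, ih, Nat.add_sub_cancel]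
    ring

section Chain

variable {a b l r : ℕ → ℝ}

theorem receive_eq_of_consistent {n : ℕ} (hn : 2 ≤ n)
    (hcons : ∀ j ∈ Icc 2 n, l j = a j * r (j - 1) + b j) :
    l n = skewProd a n 1 * r 1 + ∑ j ∈ Icc 2 n, skewProd a n j * b j
      + ∑ k ∈ Ico 2 n, skewProd a n k * (r k - l k) := by
  induction n, hn using Nat.le_induction with
  | base =>
    rw [hcons 2 (by simp)]
    simp [skewProd]
  | succ n hn ih =>
    have hB : ∑ j ∈ Icc 2 (n + 1), skewProd a (n + 1) j * b j
        = a (n + 1) * ∑ j ∈ Icc 2 n, skewProd a n j * b j + b (n + 1) := by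
      rw [sum_Icc_succ_top (by omega), skewProd_self, one_mul, mul_sum]
      congr 1
      refine sum_congr rfl fun k hk => ?_
      rw [skewProd_succ a (mem_Icc.1 hk).2, mul_assoc]
    have hD : ∑ k ∈ Ico 2 (n + 1), skewProd a (n + 1) k * (r k - l k)
        = a (n + 1) * (∑ k ∈ Ico 2 n, skewProd a n k * (r k - l k) + (r n - l n)) := by
      rw [sum_Ico_succ_top hn, skewProd_succ a le_rfl, skewProd_self, mul_one, mul_add, mul_sum]
      congr 1
      refine sum_congr rfl fun k hk => ?_
      rw [skewProd_succ a (mem_Ico.1 hk).2.le, mul_assoc]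
    rw [hcons (n + 1) (by simp only [mem_Icc]; omega), Nat.add_sub_cancel, hB, hD, skewProd_succ a (by omega),
      ih fun j hj => hcons j (by simp only [mem_Icc] at hj ⊢; omega)]
    ring

theorem mul_sum_skewProd_le {n : ℕ} {c : ℝ} {d : ℕ → ℝ} (ha : ∀ i ∈ Icc 2 n, 0 ≤ a i)
    (hc : ∀ k ∈ Ico 2 n, c ≤ skewProd a k 1) (hd : ∀ k ∈ Ico 2 n, 0 ≤ d k) :
    c * ∑ k ∈ Ico 2 n, skewProd a n k * d k ≤ skewProd a n 1 * ∑ k ∈ Ico 2 n, d k := by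
  rw [mul_sum, mul_sum]
  refine sum_le_sum fun k hk => ?_
  obtain ⟨h2k, hkn⟩ := mem_Ico.1 hk
  have hnonneg : 0 ≤ skewProd a n k :=
    prod_nonneg fun i hi => ha i (by simp only [mem_Icc] at hi ⊢; omega)
  calc c * (skewProd a n k * d k)
      ≤ skewProd a k 1 * (skewProd a n k * d k) :=
        mul_le_mul_of_nonneg_right (hc k hk) (mul_nonneg hnonneg (hd k hk))
    _ = skewProd a n 1 * d k := by
        rw [← skewProd_mul_skewProd a (by omega : 1 ≤ k) hkn.le]
        ring

end Chain

theorem stmt8_general (n : ℕ) (ahat bhat l r : ℕ → ℝ)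
    (hahat : ∀ i ∈ Finset.Icc 2 n, 0 < ahat i)
    (istar : ℕ) (histar : istar ∈ Finset.Icc 2 n)
    (hmin : ∀ k ∈ Finset.Icc 1 n,
      (∏ i ∈ Finset.Icc 2 istar, ahat i) ≤ ∏ i ∈ Finset.Icc 2 k, ahat i)
    (hcons : ∀ j ∈ Finset.Icc 2 n, l j = ahat j * r (j - 1) + bhat j)
    (hcaus : ∀ j, l j ≤ r j) :
    (∑ j ∈ Finset.Icc 2 n, (l j - r (j - 1)))
      ≤ ((∏ i ∈ Finset.Icc 2 istar, ahat i) - 1) * r 1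
        + (((∏ i ∈ Finset.Icc 2 n, ahat i) / (∏ i ∈ Finset.Icc 2 istar, ahat i) - 1)
            / ((∏ i ∈ Finset.Icc 2 n, ahat i) / (∏ i ∈ Finset.Icc 2 istar, ahat i)))
          * l n
        + (∑ j ∈ Finset.Icc 2 n, (∏ k ∈ Finset.Icc (j + 1) n, ahat k) * bhat j)
            / ((∏ i ∈ Finset.Icc 2 n, ahat i) / (∏ i ∈ Finset.Icc 2 istar, ahat i)) := by
  obtain ⟨h2, hin⟩ := mem_Icc.1 histar
  have hunroll := receive_eq_of_consistent (by omega) hcons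
  have hkey := mul_sum_skewProd_le (fun i hi => (hahat i hi).le)
    (fun k hk => hmin k (by simp only [mem_Ico, mem_Icc] at hk ⊢; omega))
    (fun k _ => sub_nonneg.2 (hcaus k))
  simp only [skewProd] at hunroll hkey
  rw [sum_Icc_sub_eq_sub_sum_Ico l r (by omega)]
  set c := ∏ i ∈ Icc 2 istar, ahat i
  set A := ∏ i ∈ Icc 2 n, ahat i
  set D := ∑ k ∈ Ico 2 n, (∏ i ∈ Icc (k + 1) n, ahat i) * (r k - l k)
  have hc : 0 < c := prod_pos fun i hi => hahat i (by simp only [mem_Icc] at hi ⊢; omega)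
  have hA : 0 < A := prod_pos hahat
  have hrhs : (c - 1) * r 1 + ((A / c - 1) / (A / c)) * l n
      + (∑ j ∈ Icc 2 n, (∏ k ∈ Icc (j + 1) n, ahat k) * bhat j) / (A / c)
      = l n - r 1 - c / A * D := by
    rw [hunroll]
    field_simp
    ring
  rw [hrhs]
  have hD : c / A * D ≤ ∑ k ∈ Ico 2 n, (r k - l k) := by
    rw [div_mul_eq_mul_div, div_le_iff₀ hA]
    linarith
  linarith

/-- Combined skew bound: with declared skews â j = â_{j,j−1} > 0
and offsets b̂ j = b̂_{j,j−1} along a chain 1,…,n, i* ≥ 2 the index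
minimizing the skew product â_{k,1} = ∏_{i=2}^{k} â i with â_{i*,1} ≤ 1,
parameter consistency l j = â j · r (j−1) + b̂ j for 2 ≤ j ≤ n, and causality
l j ≤ r j, we have (writing â_{n,i*} = â_{n,1}/â_{i*,1} and
b̂_{n,1} = Σ_{j=2}^{n} â_{n,j}·b̂_{j,j−1}):
Σ_{j=2}^{n} (l j − r (j−1))
  ≤ (â_{i*,1} − 1)·r 1 + ((â_{n,i*} − 1)/â_{n,i*})·l n + b̂_{n,1}/â_{n,i*}. -/
theorem stmt8 (n : ℕ) (hn : 2 ≤ n) (ahat bhat l r : ℕ → ℝ)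
    (hahat : ∀ i ∈ Finset.Icc 2 n, 0 < ahat i)
    (istar : ℕ) (histar : istar ∈ Finset.Icc 2 n)
    (hmin : ∀ k ∈ Finset.Icc 1 n,
      (∏ i ∈ Finset.Icc 2 istar, ahat i) ≤ ∏ i ∈ Finset.Icc 2 k, ahat i)
    (hle1 : (∏ i ∈ Finset.Icc 2 istar, ahat i) ≤ 1)
    (hcons : ∀ j ∈ Finset.Icc 2 n, l j = ahat j * r (j - 1) + bhat j)
    (hcaus : ∀ j, l j ≤ r j) :
    (∑ j ∈ Finset.Icc 2 n, (l j - r (j - 1)))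
      ≤ ((∏ i ∈ Finset.Icc 2 istar, ahat i) - 1) * r 1
        + (((∏ i ∈ Finset.Icc 2 n, ahat i) / (∏ i ∈ Finset.Icc 2 istar, ahat i) - 1)
            / ((∏ i ∈ Finset.Icc 2 n, ahat i) / (∏ i ∈ Finset.Icc 2 istar, ahat i)))
          * l n
        + (∑ j ∈ Finset.Icc 2 n, (∏ k ∈ Finset.Icc (j + 1) n, ahat k) * bhat j)
            / ((∏ i ∈ Finset.Icc 2 n, ahat i) / (∏ i ∈ Finset.Icc 2 istar, ahat i)) :=
  stmt8_general n ahat bhat l r hahat istar histar hmin hcons hcaus
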